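/- For every integer m ≥ 1 and nonnegative real weights β_1,…,β_m and α_0,…,α_m with Σ_{j=1}^m β_j + Σ_{i=0}^m α_i = 1, there exists a binary tree with m internal nodes whose search cost satisfies C ≤ H(α_0, β_1, α_1, …, β_m, α_m) + 1 + Σ_{i=0}^m α_i. -/

import Mathlib

/-!
Lay the weights `α₀, β₀, α₁, …, β_{m-1}, α_m` out as consecutive intervals of `[0, 1]` and
build the tree by bisection: a subtree at depth `d` owns a dyadic interval of length `2⁻ᵈ`,
and its root is the key separating the leaves whose midpoints lie left of the midpoint of
that interval from those whose midpoints lie right of it. Every key of a subtree then lies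
inside the subtree's interval, so a key at depth `d` has `β ≤ 2⁻ᵈ`, while a leaf at depth `d`
overhangs its interval by at most its length, so `α ≤ 4 · 2⁻ᵈ`. Hence `β d ≤ β log₂ β⁻¹` and
`α d ≤ α log₂ α⁻¹ + 2α`, and summing gives `C ≤ H + Σ β + 2 Σ α = H + 1 + Σ α`.
-/

/-- A (full) binary tree: every internal node has exactly two children. -/
inductive BTree where
  | leaf : BTree
  | node : BTree → BTree → BTree

namespace BTree

/-- Depths of the leaves, in left-to-right order. -/
def leafDepths : BTree → List ℕ
  | leaf => [0]
  | node l r => l.leafDepths.map (· + 1) ++ r.leafDepths.map (· + 1)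

/-- Depths of the internal nodes, in symmetric (in-)order. -/
def internalDepths : BTree → List ℕ
  | leaf => []
  | node l r => l.internalDepths.map (· + 1) ++ [0] ++ r.internalDepths.map (· + 1)

end BTree

open Finset

theorem exists_crossing_index {α : Type*} [LinearOrder α] (f : ℕ → α) (c : α) (lo : ℕ) :
    ∀ n, ∃ a b, a + b = n ∧ (0 < a → f (lo + a) ≤ c) ∧ (0 < b → c ≤ f (lo + a + 1))
  | 0 => ⟨0, 0, rfl, by simp, by simp⟩
  | n + 1 => by
    obtain ⟨a, b, rfl, ha, hb⟩ := exists_crossing_index f c lo n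
    rcases Nat.eq_zero_or_pos b with rfl | hb0
    · rcases le_total c (f (lo + a + 1)) with hc | hc
      · exact ⟨a, 1, rfl, ha, fun _ => hc⟩
      · exact ⟨a + 1, 0, rfl, fun _ => hc, by simp⟩
    · exact ⟨a, b + 1, by omega, ha, fun _ => hb hb0⟩

theorem mul_natCast_le_mul_logb_inv_add {x : ℝ} {d e : ℕ} (hx : 0 ≤ x)
    (h : x * 2 ^ d ≤ 2 ^ e) : x * d ≤ x * Real.logb 2 x⁻¹ + e * x := by
  rcases hx.eq_or_lt with rfl | hx
  · simp
  have hlog : Real.logb 2 (x * 2 ^ d) ≤ e := by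
    simpa [Real.logb_pow] using Real.logb_le_logb_of_le one_lt_two (by positivity) h
  rw [Real.logb_mul hx.ne' (by positivity), Real.logb_pow,
    Real.logb_self_eq_one one_lt_two] at hlog
  rw [Real.logb_inv]
  linarith [mul_le_mul_of_nonneg_left hlog hx.le]

theorem sum_mul_natCast_le_sum_mul_logb_inv_add {ι : Type*} (s : Finset ι) {p : ι → ℝ}
    {d : ι → ℕ} {e : ℕ} (hp : ∀ i, 0 ≤ p i) (h : ∀ i, p i * 2 ^ d i ≤ 2 ^ e) :
    ∑ i ∈ s, p i * d i ≤ ∑ i ∈ s, p i * Real.logb 2 (p i)⁻¹ + e * ∑ i ∈ s, p i := by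
  rw [mul_sum, ← sum_add_distrib]
  exact sum_le_sum fun i _ => mul_natCast_le_mul_logb_inv_add (hp i) (h i)

theorem List.Forall₂.getD_range {R : ℕ → ℕ → Prop} {n : ℕ} {ds : List ℕ}
    (h : Forall₂ R (range n) ds) {i : ℕ} (hi : i < n) : R i (ds.getD i 0) := by
  have hlen : ds.length = n := by simpa using h.length_eq.symm
  rw [getD_eq_getElem _ _ (hlen ▸ hi)]
  have := h.get (by simpa using hi) (hlen ▸ hi)
  rwa [get_eq_getElem, get_eq_getElem, getElem_range] at this

noncomputable def prefixSum {n : ℕ} (f : Fin n → ℝ) (k : ℕ) : ℝ :=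
  ∑ i ∈ range k, if h : i < n then f ⟨i, h⟩ else 0

section prefixSum

variable {n : ℕ} (f : Fin n → ℝ)

theorem prefixSum_zero : prefixSum f 0 = 0 := by simp [prefixSum]

theorem prefixSum_succ_sub (i : Fin n) : prefixSum f (i + 1) - prefixSum f i = f i := by
  simp [prefixSum, sum_range_succ]

theorem prefixSum_self : prefixSum f n = ∑ i, f i := by
  rw [prefixSum, ← Fin.sum_univ_eq_sum_range (fun i => if h : i < n then f ⟨i, h⟩ else 0)]
  simp

theorem prefixSum_le_succ {f : Fin n → ℝ} (hf : ∀ i, 0 ≤ f i) (k : ℕ) :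
    prefixSum f k ≤ prefixSum f (k + 1) := by
  rw [prefixSum, prefixSum, sum_range_succ]
  refine le_add_of_nonneg_right ?_
  split_ifs
  exacts [hf _, le_rfl]

end prefixSum

namespace BTree

theorem forall₂_mul_two_pow_map_succ {w : ℕ → ℝ} {c c' : ℝ} {ks ds : List ℕ}
    (h : List.Forall₂ (fun k d => w k * 2 ^ d ≤ c') ks ds) (hc : 2 * c' ≤ c) :
    List.Forall₂ (fun k d => w k * 2 ^ d ≤ c) ks (ds.map (· + 1)) :=
  List.forall₂_map_right_iff.2 <| h.imp fun k d hkd => by rw [pow_succ]; linarith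

/-- Leaf `i` occupies `[x i, y i]` and key `k` occupies `[y k, x (k + 1)]`.
`AdmissibleInterval x y lo n u v` says that `[u, v]` may be the interval of a subtree holding
the keys `lo, …, lo + n - 1` and the leaves `lo, …, lo + n`: each of these keys lies in
`[u, v]`, the midpoint of leaf `lo` is at least `u` and that of leaf `lo + n` at most `v`.
A lone leaf needs only its midpoint at least `u` and its right end at most `v + (v - u)`,
or the mirror image. -/
def AdmissibleInterval (x y : ℕ → ℝ) (lo : ℕ) : ℕ → ℝ → ℝ → Prop
  | 0, u, v =>
    (2 * u ≤ x lo + y lo ∧ y lo ≤ 2 * v - u) ∨ (x lo + y lo ≤ 2 * v ∧ 2 * u - v ≤ x lo)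
  | n + 1, u, v => (∀ k, lo ≤ k → k ≤ lo + n → u ≤ y k ∧ x (k + 1) ≤ v) ∧
      2 * u ≤ x lo + y lo ∧ x (lo + n + 1) + y (lo + n + 1) ≤ 2 * v

namespace AdmissibleInterval

variable {x y : ℕ → ℝ}

theorem of_le (hxy : ∀ i, x i ≤ y i) (hyx : ∀ i, y i ≤ x (i + 1))
    {lo n : ℕ} {u v : ℝ} (hu : u ≤ x lo) (hv : y (lo + n) ≤ v) :
    AdmissibleInterval x y lo n u v := by
  have hx : Monotone x := monotone_nat_of_le_succ fun i => (hxy i).trans (hyx i)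
  have hy : Monotone y := monotone_nat_of_le_succ fun i => (hyx i).trans (hxy (i + 1))
  cases n with
  | zero =>
    rw [add_zero] at hv
    exact .inl ⟨by linarith [hxy lo], by linarith [hxy lo]⟩
  | succ n =>
    rw [← add_assoc] at hv
    have hlo := hxy lo
    have hhi := hxy (lo + n + 1)
    refine ⟨fun k hk hkn => ⟨?_, ?_⟩, by linarith, by linarith⟩
    · linarith [hy hk]
    · linarith [hx (show k + 1 ≤ lo + n + 1 by omega)]

theorem left (hxy : ∀ i, x i ≤ y i) (hyx : ∀ i, y i ≤ x (i + 1))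
    {lo a b : ℕ} {u v : ℝ} (h : AdmissibleInterval x y lo (a + b + 1) u v)
    (hcut : 0 < a → x (lo + a) + y (lo + a) ≤ u + v) :
    AdmissibleInterval x y lo a u ((u + v) / 2) := by
  obtain ⟨hkeys, hlo, -⟩ := h
  cases a with
  | zero => exact .inl ⟨hlo, by linarith [hyx lo, (hkeys lo le_rfl (by omega)).2]⟩
  | succ a =>
    rw [← add_assoc] at hcut
    have hx : Monotone x := monotone_nat_of_le_succ fun i => (hxy i).trans (hyx i)
    refine ⟨fun k hk hka => ⟨(hkeys k hk (by omega)).1, ?_⟩, hlo, ?_⟩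
    · linarith [hx (show k + 1 ≤ lo + a + 1 by omega), hxy (lo + a + 1), hcut a.succ_pos]
    · linarith [hcut a.succ_pos]

theorem right (hxy : ∀ i, x i ≤ y i) (hyx : ∀ i, y i ≤ x (i + 1))
    {lo a b : ℕ} {u v : ℝ} (h : AdmissibleInterval x y lo (a + b + 1) u v)
    (hcut : 0 < b → u + v ≤ x (lo + a + 1) + y (lo + a + 1)) :
    AdmissibleInterval x y (lo + a + 1) b ((u + v) / 2) v := by
  obtain ⟨hkeys, -, hhi⟩ := h
  cases b with
  | zero =>
    exact .inr ⟨by simpa using hhi,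
      by linarith [hyx (lo + a), (hkeys (lo + a) (by omega) le_rfl).1]⟩
  | succ b =>
    have hy : Monotone y := monotone_nat_of_le_succ fun i => (hyx i).trans (hxy (i + 1))
    refine ⟨fun k hk hkb => ⟨?_, (hkeys k (by omega) (by omega)).2⟩, ?_, ?_⟩
    · linarith [hy hk, hxy (lo + a + 1), hcut b.succ_pos]
    · linarith [hcut b.succ_pos]
    · rw [show lo + a + 1 + b + 1 = lo + (a + (b + 1)) + 1 by omega]
      linarith

end AdmissibleInterval

theorem exists_forall₂_depth_bounds {x y : ℕ → ℝ} (hxy : ∀ i, x i ≤ y i)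
    (hyx : ∀ i, y i ≤ x (i + 1)) {n lo : ℕ} {u v : ℝ} (h : AdmissibleInterval x y lo n u v) :
    ∃ T : BTree,
      List.Forall₂ (fun k d => (x (k + 1) - y k) * 2 ^ d ≤ v - u)
        (List.range' lo n) T.internalDepths ∧
      List.Forall₂ (fun i d => (y i - x i) * 2 ^ d ≤ 4 * (v - u))
        (List.range' lo (n + 1)) T.leafDepths := by
  induction n using Nat.strong_induction_on generalizing lo u v with | _ n ih => ?_
  cases n with
  | zero =>
    refine ⟨leaf, .nil, .cons ?_ .nil⟩
    rw [pow_zero, mul_one]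
    rcases h with ⟨h₁, h₂⟩ | ⟨h₁, h₂⟩ <;> linarith
  | succ n =>
    obtain ⟨a, b, rfl, hcutL, hcutR⟩ := exists_crossing_index (fun i => x i + y i) (u + v) lo n
    obtain ⟨L, hLk, hLl⟩ := ih a (by omega) (h.left hxy hyx hcutL)
    obtain ⟨R, hRk, hRl⟩ := ih b (by omega) (h.right hxy hyx hcutR)
    have hroot := h.1 (lo + a) (by omega) (by omega)
    refine ⟨node L R, ?_, ?_⟩
    · rw [internalDepths, show a + b + 1 = a + (b + 1) by omega, ← List.range'_append_1,
        List.range'_succ, ← List.singleton_append, ← List.append_assoc]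
      exact List.rel_append
        (List.rel_append (forall₂_mul_two_pow_map_succ hLk (by linarith))
          (.cons (by rw [pow_zero, mul_one]; linarith) .nil))
        (forall₂_mul_two_pow_map_succ hRk (by linarith))
    · rw [leafDepths, show a + b + 1 + 1 = (a + 1) + (b + 1) by omega, ← List.range'_append_1,
        ← add_assoc]
      exact List.rel_append (forall₂_mul_two_pow_map_succ hLl (by linarith))
        (forall₂_mul_two_pow_map_succ hRl (by linarith))

end BTree

theorem nearly_optimal_bst_method2_general
    (m : ℕ)
    (β : Fin m → ℝ) (α : Fin (m + 1) → ℝ)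
    (hβ : ∀ j, 0 ≤ β j) (hα : ∀ i, 0 ≤ α i)
    (hsum : (∑ j, β j) + (∑ i, α i) = 1) :
    ∃ T : BTree,
      T.internalDepths.length = m ∧ T.leafDepths.length = m + 1 ∧
      (∑ j : Fin m, β j * ((T.internalDepths.getD j 0 : ℝ) + 1))
        + (∑ i : Fin (m + 1), α i * (T.leafDepths.getD i 0 : ℝ))
      ≤ ((∑ j, β j * Real.logb 2 (β j)⁻¹) + (∑ i, α i * Real.logb 2 (α i)⁻¹))
          + 1 + (∑ i, α i) := by
  set A := prefixSum α
  set B := prefixSum β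
  have hxy (i : ℕ) : A i + B i ≤ A (i + 1) + B i := by linarith [prefixSum_le_succ hα i]
  have hyx (i : ℕ) : A (i + 1) + B i ≤ A (i + 1) + B (i + 1) := by
    linarith [prefixSum_le_succ hβ i]
  obtain ⟨T, hkeys, hleaves⟩ := BTree.exists_forall₂_depth_bounds hxy hyx
    (.of_le (lo := 0) (n := m) (u := 0) (v := 1) hxy hyx (by simp [A, B, prefixSum_zero])
      (by simp [A, B, prefixSum_self, hsum, add_comm]))
  rw [← List.range_eq_range'] at hkeys hleaves
  have hβT (j : Fin m) : β j * 2 ^ T.internalDepths.getD j 0 ≤ 2 ^ 0 := by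
    simpa [prefixSum_succ_sub, B] using hkeys.getD_range j.isLt
  have hαT (i : Fin (m + 1)) : α i * 2 ^ T.leafDepths.getD i 0 ≤ 2 ^ 2 := by
    simpa [prefixSum_succ_sub, A, show (2 : ℝ) ^ 2 = 4 by norm_num] using
      hleaves.getD_range i.isLt
  refine ⟨T, by simpa using hkeys.length_eq.symm, by simpa using hleaves.length_eq.symm, ?_⟩
  have hkeycost := sum_mul_natCast_le_sum_mul_logb_inv_add univ hβ hβT
  have hleafcost := sum_mul_natCast_le_sum_mul_logb_inv_add univ hα hαT
  simp only [mul_add, mul_one, sum_add_distrib]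
  push_cast at hkeycost hleafcost
  linarith

/-- Mehlhorn's Method 2 (bisection heuristic) guarantee: for weights
`β₁,…,β_m` (internal nodes, symmetric order) and `α₀,…,α_m` (leaves,
left-to-right) summing to 1, there is a binary search tree with search cost
at most `H + 1 + Σ αᵢ`. -/
theorem nearly_optimal_bst_method2
    (m : ℕ) (hm : 1 ≤ m)
    (β : Fin m → ℝ) (α : Fin (m + 1) → ℝ)
    (hβ : ∀ j, 0 ≤ β j) (hα : ∀ i, 0 ≤ α i)
    (hsum : (∑ j, β j) + (∑ i, α i) = 1) :
    ∃ T : BTree,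
      T.internalDepths.length = m ∧ T.leafDepths.length = m + 1 ∧
      (∑ j : Fin m, β j * ((T.internalDepths.getD j 0 : ℝ) + 1))
        + (∑ i : Fin (m + 1), α i * (T.leafDepths.getD i 0 : ℝ))
      ≤ ((∑ j, β j * Real.logb 2 (β j)⁻¹) + (∑ i, α i * Real.logb 2 (α i)⁻¹))
          + 1 + (∑ i, α i) :=
  nearly_optimal_bst_method2_general m β α hβ hα hsum
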